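/- If a pair (A, φ) in the space of gauged holomorphic maps minimizes the Yang-Mills-Higgs functional, i.e. attains the value 2πτ C₁(E,ω) − 8π² Ch₂(E,ω), then it satisfies the vortex equations F_A^{0,2}=0, ∂̄_A φ = 0, and ΛF_A − (i/2)(φ⊗φ* − τI) = 0; conversely any solution of the vortex equations attains this minimum. -/

import Mathlib

theorem mul_norm_sq_eq_zero_iff {E : Type*} [NormedAddCommGroup E] {c : ℝ} (hc : c ≠ 0)
    (x : E) : c * ‖x‖ ^ 2 = 0 ↔ x = 0 := by
  simp [hc]

/-- A gauged holomorphic pair minimizes the Yang-Mills-Higgs functional,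
i.e. attains the topological value `C = 2πτC₁(E,ω) − 8π²Ch₂(E,ω)`, if and only if it
satisfies the vortex equations `F_A^{0,2} = 0`, `∂̄_A φ = 0`,
`ΛF_A − (i/2)(φ⊗φ* − τI) = 0`.  The energy identity of Theorem 1.1 is the hypothesis. -/
theorem minimizer_iff_vortex
    {Conn Sect V₁ V₂ V₃ : Type*}
    [NormedAddCommGroup V₁] [NormedAddCommGroup V₂] [NormedAddCommGroup V₃]
    (F02 : Conn → V₁)                  -- (0,2)-part of the curvature F_A
    (dbar : Conn → Sect → V₂)          -- ∂̄_A φ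
    (vort : Conn → Sect → V₃)          -- ΛF_A − (i/2)(φ⊗φ* − τI)
    (YMH : Conn → Sect → ℝ)            -- Yang-Mills-Higgs functional
    (C : ℝ)                            -- topological constant 2πτC₁(E,ω) − 8π²Ch₂(E,ω)
    (energy_identity : ∀ A φ,
      YMH A φ = ‖vort A φ‖ ^ 2 + 4 * ‖F02 A‖ ^ 2 + 2 * ‖dbar A φ‖ ^ 2 + C)
    (A : Conn) (φ : Sect) :
    YMH A φ = C ↔ (F02 A = 0 ∧ dbar A φ = 0 ∧ vort A φ = 0) := by
  rw [energy_identity, add_eq_right,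
    add_eq_zero_iff_of_nonneg (by positivity) (by positivity),
    add_eq_zero_iff_of_nonneg (by positivity) (by positivity),
    sq_eq_zero_iff, norm_eq_zero, mul_norm_sq_eq_zero_iff four_ne_zero,
    mul_norm_sq_eq_zero_iff two_ne_zero]
  tauto
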